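/- Degeneration of the q-Heun equation to the q-hypergeometric equation: let p⁰(x) = (x − q^{h1+1/2} t1)(x − q^{h2+1/2} t2), p²(x) = q^{α1+α2}(x − q^{l1−1/2} t1)(x − q^{l2−1/2} t2), and p¹(x) = −((q^{α1}+q^{α2}) x² + E x + q^{(h1+h2+l1+l2+α1+α2)/2} (q^{β/2}+q^{−β/2}) t1 t2), so that the q-Heun equation is p⁰(x) g(x/q) + p¹(x) g(x) + p²(x) g(qx) = 0. Assume l2 = h2 + 1 and E = −(q^{α1}+q^{α2}) q^{h2+1/2} t2 − q^{(h1−h2+l1+l2+α1+α2−1)/2} (q^{β/2}+q^{−β/2}) t1. Then p⁰(q^{h2+1/2} t2) = 0, p¹(q^{h2+1/2} t2) = 0, and p²(q^{h2+1/2} t2) = 0; that is, the three coefficient polynomials of the q-Heun equation have the common factor (x − q^{h2+1/2} t2), and dividing by it yields a q-hypergeometric difference equation. -/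

import Mathlib

noncomputable def qp (q r : ℝ) : ℂ := ((q ^ r : ℝ) : ℂ)

noncomputable def p0 (q h1 h2 : ℝ) (t1 t2 : ℂ) (x : ℂ) : ℂ :=
  (x - qp q (h1 + 1/2) * t1) * (x - qp q (h2 + 1/2) * t2)

noncomputable def p2 (q l1 l2 a1 a2 : ℝ) (t1 t2 : ℂ) (x : ℂ) : ℂ :=
  qp q (a1 + a2) * (x - qp q (l1 - 1/2) * t1) * (x - qp q (l2 - 1/2) * t2)

noncomputable def p1 (q h1 h2 l1 l2 a1 a2 β : ℝ) (t1 t2 : ℂ) (E : ℂ) (x : ℂ) : ℂ :=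
  -((qp q a1 + qp q a2) * x ^ 2 + E * x
      + qp q ((h1 + h2 + l1 + l2 + a1 + a2) / 2) * (qp q (β / 2) + qp q (-β / 2)) * t1 * t2)

theorem qp_add {q : ℝ} (hq : 0 < q) (r s : ℝ) : qp q (r + s) = qp q r * qp q s := by
  simp only [qp, Real.rpow_add hq, Complex.ofReal_mul]

theorem p0_eq_zero_right (q h1 h2 : ℝ) (t1 t2 : ℂ) :
    p0 q h1 h2 t1 t2 (qp q (h2 + 1/2) * t2) = 0 := by
  simp [p0]

theorem p2_eq_zero_right (q l1 l2 a1 a2 : ℝ) (t1 t2 : ℂ) :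
    p2 q l1 l2 a1 a2 t1 t2 (qp q (l2 - 1/2) * t2) = 0 := by
  simp [p2]

/-- `E` is chosen so that the constant term of `p1` is `x₀` times the constant coefficient of `E`. -/
theorem p1_eq_zero_right {q : ℝ} (hq : 0 < q) (h1 h2 l1 l2 a1 a2 β : ℝ) (t1 t2 : ℂ) :
    p1 q h1 h2 l1 l2 a1 a2 β t1 t2
      (-(qp q a1 + qp q a2) * qp q (h2 + 1/2) * t2
        - qp q ((h1 - h2 + l1 + l2 + a1 + a2 - 1) / 2) * (qp q (β / 2) + qp q (-β / 2)) * t1)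
      (qp q (h2 + 1/2) * t2) = 0 := by
  have hexp : qp q ((h1 + h2 + l1 + l2 + a1 + a2) / 2)
      = qp q ((h1 - h2 + l1 + l2 + a1 + a2 - 1) / 2) * qp q (h2 + 1/2) := by
    rw [← qp_add hq]
    ring_nf
  rw [p1, hexp]
  ring

theorem stmt19_general (q h1 h2 l1 l2 a1 a2 β : ℝ) (hq : 0 < q)
    (t1 t2 : ℂ) (E : ℂ)
    (hl2 : l2 = h2 + 1)
    (hE : E = -(qp q a1 + qp q a2) * qp q (h2 + 1/2) * t2
        - qp q ((h1 - h2 + l1 + l2 + a1 + a2 - 1) / 2) * (qp q (β / 2) + qp q (-β / 2)) * t1) :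
    p0 q h1 h2 t1 t2 (qp q (h2 + 1/2) * t2) = 0 ∧
    p1 q h1 h2 l1 l2 a1 a2 β t1 t2 E (qp q (h2 + 1/2) * t2) = 0 ∧
    p2 q l1 l2 a1 a2 t1 t2 (qp q (h2 + 1/2) * t2) = 0 := by
  have hroot : h2 + 1/2 = l2 - 1/2 := by rw [hl2]; ring
  refine ⟨p0_eq_zero_right .., hE ▸ p1_eq_zero_right hq .., ?_⟩
  rw [hroot]
  exact p2_eq_zero_right ..

theorem stmt19 (q h1 h2 l1 l2 a1 a2 β : ℝ) (hq : 0 < q) (hq1 : q ≠ 1)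
    (t1 t2 : ℂ) (ht1 : t1 ≠ 0) (ht2 : t2 ≠ 0) (E : ℂ)
    (hl2 : l2 = h2 + 1)
    (hE : E = -(qp q a1 + qp q a2) * qp q (h2 + 1/2) * t2
        - qp q ((h1 - h2 + l1 + l2 + a1 + a2 - 1) / 2) * (qp q (β / 2) + qp q (-β / 2)) * t1) :
    p0 q h1 h2 t1 t2 (qp q (h2 + 1/2) * t2) = 0 ∧
    p1 q h1 h2 l1 l2 a1 a2 β t1 t2 E (qp q (h2 + 1/2) * t2) = 0 ∧
    p2 q l1 l2 a1 a2 t1 t2 (qp q (h2 + 1/2) * t2) = 0 :=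
  stmt19_general q h1 h2 l1 l2 a1 a2 β hq t1 t2 E hl2 hE
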